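/- There is no triangulated closed surface K on a 10-element vertex set V that is centrally symmetric under an involution σ and whose edge set consists of all 2-element subsets of V except the five pairs {v, σ(v)} (i.e., there is no centrally symmetric tight triangulated surface on 10 vertices). -/

import Mathlib

/-- A simple graph is a single cycle iff it is connected and 2-regular. -/
def IsSingleCycle {α : Type*} (G : SimpleGraph α) : Prop :=
  G.Connected ∧ ∀ a : α, (G.neighborSet a).ncard = 2

section Tri

variable {V : Type*} [DecidableEq V]

/-- The edges of a family of simplices: the 2-element subsets of its members. -/
def triEdges (K : Finset (Finset V)) : Finset (Finset V) :=
  K.biUnion fun T => T.powersetCard 2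

/-- The underlying graph of a family of simplices. -/
def cplxGraph (K : Finset (Finset V)) : SimpleGraph V where
  Adj a b := a ≠ b ∧ ∃ T ∈ K, a ∈ T ∧ b ∈ T
  symm := ⟨by
    rintro a b ⟨h, T, hT, ha, hb⟩
    exact ⟨h.symm, T, hT, hb, ha⟩⟩
  loopless := ⟨fun a h => h.1 rfl⟩

/-- The link graph of a vertex `v`: `a,b` are joined iff `{v,a,b}` is a simplex. -/
def linkGraph (K : Finset (Finset V)) (v : V) : SimpleGraph V where
  Adj a b := a ≠ b ∧ a ≠ v ∧ b ≠ v ∧ ({v, a, b} : Finset V) ∈ K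
  symm := ⟨by
    rintro a b ⟨h1, h2, h3, h4⟩
    refine ⟨h1.symm, h3, h2, ?_⟩
    rwa [Finset.pair_comm b a]⟩
  loopless := ⟨fun a h => h.1 rfl⟩

/-- Euler characteristic of a triangle family on vertex set `W`. -/
def eulerCharOn (W : Finset V) (K : Finset (Finset V)) : ℤ :=
  (W.card : ℤ) - ((triEdges K).card : ℤ) + (K.card : ℤ)

/-- `K` is a triangulated closed surface on the vertex set `W`. -/
def IsTriSurfaceOn (W : Finset V) (K : Finset (Finset V)) : Prop :=
  (∀ T ∈ K, T.card = 3 ∧ T ⊆ W) ∧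
  ((cplxGraph K).induce (W : Set V)).Connected ∧
  (∀ e ∈ triEdges K, (K.filter fun T => e ⊆ T).card = 2) ∧
  (∀ v ∈ W, IsSingleCycle ((linkGraph K v).induce ((cplxGraph K).neighborSet v)))

/-- `K` is centrally symmetric on vertex set `W` under the involution `σ`. -/
def IsCSOn (W : Finset V) (K : Finset (Finset V)) (σ : V → V) : Prop :=
  Set.MapsTo σ (W : Set V) (W : Set V) ∧
  (∀ v ∈ W, σ (σ v) = v) ∧
  (∀ T ∈ K, T.image σ ∈ K) ∧
  (∀ v ∈ W, σ v ≠ v) ∧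
  (∀ e ∈ triEdges K, e.image σ ≠ e) ∧
  (∀ T ∈ K, T.image σ ≠ T)

/-- Orientability of a triangulated surface. -/
def IsOrientableTri (K : Finset (Finset V)) : Prop :=
  ∃ ori : Finset V → V → V → Bool,
    (∀ T ∈ K, ∀ a ∈ T, ∀ b ∈ T, a ≠ b → ori T a b = !ori T b a) ∧
    (∀ T ∈ K, ∀ a b c : V, a ≠ b → b ≠ c → a ≠ c → T = {a, b, c} → ori T a b = ori T b c) ∧
    (∀ T ∈ K, ∀ T' ∈ K, T ≠ T' → ∀ a b : V, a ≠ b → a ∈ T → b ∈ T → a ∈ T' → b ∈ T' →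
      ori T a b = ori T' b a)

end Tri

/-!
A tight centrally symmetric surface on 10 vertices would have `45 - 5 = 40` edges. Each edge
lies in exactly two triangles and each triangle has three edges, so double counting gives
`3 F = 2 E = 80` for the number `F` of triangles, which is impossible.
-/

open Finset

section DoubleCounting

variable {V : Type*} [DecidableEq V]

lemma filter_triEdges_subset_eq_powersetCard {K : Finset (Finset V)} {T : Finset V}
    (hT : T ∈ K) : {e ∈ triEdges K | e ⊆ T} = T.powersetCard 2 := by
  ext e
  simp only [mem_filter, mem_powersetCard, triEdges, mem_biUnion]
  exact ⟨fun ⟨⟨_, _, _, hc⟩, heT⟩ => ⟨heT, hc⟩, fun ⟨heT, hc⟩ => ⟨⟨T, hT, heT, hc⟩, heT⟩⟩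

lemma card_triEdges_mul_two {K : Finset (Finset V)} (hK : ∀ T ∈ K, #T = 3)
    (hE : ∀ e ∈ triEdges K, #{T ∈ K | e ⊆ T} = 2) :
    #(triEdges K) * 2 = #K * 3 :=
  card_mul_eq_card_mul (fun e T : Finset V => e ⊆ T) hE fun T hT => by
    rw [bipartiteBelow, filter_triEdges_subset_eq_powersetCard hT, card_powersetCard, hK T hT]
    rfl

lemma card_image_pair_mul_two [Fintype V] {σ : V → V} (hinv : ∀ v, σ (σ v) = v)
    (hfix : ∀ v, σ v ≠ v) :
    #(univ.image fun v => ({v, σ v} : Finset V)) * 2 = Fintype.card V := by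
  have hpairs_at :
      ∀ v, {e ∈ univ.image fun w => ({w, σ w} : Finset V) | v ∈ e} = {{v, σ v}} := by
    intro v
    ext e
    simp only [mem_filter, mem_image, mem_univ, true_and, mem_singleton]
    constructor
    · rintro ⟨⟨w, rfl⟩, hv⟩
      rcases mem_insert.1 hv with rfl | hv
      · rfl
      · rw [mem_singleton.1 hv, hinv, pair_comm]
    · rintro rfl
      exact ⟨⟨v, rfl⟩, mem_insert_self _ _⟩
  have h := card_mul_eq_card_mul (fun v (e : Finset V) => v ∈ e)
    (s := univ) (t := univ.image fun v => ({v, σ v} : Finset V)) (m := 1) (n := 2)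
    (fun v _ => by rw [bipartiteAbove, hpairs_at, card_singleton])
    (fun e he => by
      obtain ⟨w, -, rfl⟩ := mem_image.1 he
      rw [bipartiteBelow, filter_mem_eq_inter, univ_inter, card_pair (hfix w).symm])
  rw [← h, card_univ, mul_one]

end DoubleCounting

/-- There is no centrally symmetric tight triangulated closed surface on 10 vertices:
no triangulated closed surface on a 10-element vertex set, centrally symmetric under an
involution `σ`, whose edge set consists of all pairs except the five pairs `{v, σ v}`. -/
theorem no_tight_CS_surface_on_ten_vertices {V : Type} [Fintype V] [DecidableEq V]
    (hV : Fintype.card V = 10) :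
    ¬ ∃ (K : Finset (Finset V)) (σ : V → V),
        IsTriSurfaceOn Finset.univ K ∧ IsCSOn Finset.univ K σ ∧
        triEdges K =
          (Finset.univ : Finset V).powersetCard 2 \
            Finset.univ.image (fun v => ({v, σ v} : Finset V)) := by
  rintro ⟨K, σ, ⟨hK, -, hE2, -⟩, ⟨-, hinv, -, hfix, -, -⟩, hE⟩
  have hpairs_sub : univ.image (fun v => ({v, σ v} : Finset V)) ⊆ univ.powersetCard 2 := by
    intro e he
    obtain ⟨v, -, rfl⟩ := mem_image.1 he
    exact mem_powersetCard.2 ⟨subset_univ _, card_pair (hfix v (mem_univ v)).symm⟩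
  have hpairs : #(univ.image fun v => ({v, σ v} : Finset V)) = 5 := by
    have h := card_image_pair_mul_two (fun v => hinv v (mem_univ v)) (fun v => hfix v (mem_univ v))
    omega
  have hedges : #(triEdges K) = 40 := by
    rw [hE, card_sdiff_of_subset hpairs_sub, card_powersetCard, card_univ, hV, hpairs]
    rfl
  have hdouble := card_triEdges_mul_two (fun T hT => (hK T hT).1) hE2
  omega
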